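/- Let (L,·) be a commutative LC-loop with identity e, let a ∈ L and set B = L_a (= R_a by commutativity), and let (L,∘) be a commutative loop such that (I,B,B) is an isotopism from (L,·) to (L,∘). Then L_a is an isomorphism of (L, F_{a⁻¹,e}) onto (L,∘), R_a is an isomorphism of (L, F_{e,a⁻¹}) onto (L,∘), and both f,g-isotopes F_{a⁻¹,e} and F_{e,a⁻¹} are commutative C-loops. -/

import Mathlib

/-- A loop operation on `L` with two-sided identity `e` and bijective translations. -/
def IsLoopOp {L : Type*} (mul : L → L → L) (e : L) : Prop :=
  (∀ x, mul e x = x) ∧ (∀ x, mul x e = x) ∧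
  (∀ a, Function.Bijective (fun x => mul a x)) ∧
  (∀ a, Function.Bijective (fun x => mul x a))

/-- A quasigroup operation: all translations are bijective. -/
def IsQuasigroupOp {L : Type*} (mul : L → L → L) : Prop :=
  (∀ a, Function.Bijective (fun x => mul a x)) ∧
  (∀ a, Function.Bijective (fun x => mul x a))

/-- LC identity: (x·(x·y))·z = x·(x·(y·z)). -/
def LCIdent {L : Type*} (mul : L → L → L) : Prop :=
  ∀ x y z, mul (mul x (mul x y)) z = mul x (mul x (mul y z))

/-- RC identity: ((y·z)·x)·x = y·((z·x)·x). -/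
def RCIdent {L : Type*} (mul : L → L → L) : Prop :=
  ∀ x y z, mul (mul (mul y z) x) x = mul y (mul (mul z x) x)

/-- C identity: ((y·x)·x)·z = y·(x·(x·z)). -/
def CIdent {L : Type*} (mul : L → L → L) : Prop :=
  ∀ x y z, mul (mul (mul y x) x) z = mul y (mul x (mul x z))

/-- Commutativity of a binary operation. -/
def CommOp {L : Type*} (mul : L → L → L) : Prop := ∀ x y, mul x y = mul y x

/-- `a` lies in the center of `(L, mul)`. -/
def InCenterOp {L : Type*} (mul : L → L → L) (a : L) : Prop :=
  (∀ x, mul a x = mul x a) ∧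
  (∀ x y, mul (mul a x) y = mul a (mul x y)) ∧
  (∀ x y, mul (mul x a) y = mul x (mul a y)) ∧
  (∀ x y, mul (mul x y) a = mul x (mul y a))

/-- Central square: every square lies in the center. -/
def CentralSquareOp {L : Type*} (mul : L → L → L) : Prop :=
  ∀ x, InCenterOp mul (mul x x)

/-- Alternative: x·(x·y) = (x·x)·y and (y·x)·x = y·(x·x). -/
def AlternativeOp {L : Type*} (mul : L → L → L) : Prop :=
  (∀ x y, mul x (mul x y) = mul (mul x x) y) ∧
  (∀ x y, mul (mul y x) x = mul y (mul x x))

/-- Two binary systems on `L` are isotopic. -/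
def Isotopic {L : Type*} (m₁ m₂ : L → L → L) : Prop :=
  ∃ A B C : L → L, Function.Bijective A ∧ Function.Bijective B ∧ Function.Bijective C ∧
    ∀ x y, m₂ (A x) (B y) = C (m₁ x y)

/-!
A commutative LC-loop is a C-loop; hence it has the left inverse property, and its squares are
nuclear. Commutativity of `(L,∘)` transported along the isotopism `(I, L_a, L_a)` gives the swap
identity `x·y = (a·y)·(a⁻¹·x)`. Both f,g-isotopes are the operation `x ∗ y = x·(a·y)`, which the
swap identity and nuclearity of `a·a` make commutative; `L_a` carries it to `(L,∘)` because
`(L,·)` is commutative, and its C identity reduces to that of `(L,·)` through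
`a·(x·(a·(x·w))) = (a·x)·((a·x)·w)`.
-/

section CommLCLoop

variable {L : Type*} {mul : L → L → L} {e a a' : L}

def twistedMul (mul : L → L → L) (a : L) : L → L → L := fun x y => mul x (mul a y)

theorem LCIdent.mul_self_mul (hLC : LCIdent mul) (hloop : IsLoopOp mul e) (x y : L) :
    mul (mul x x) y = mul x (mul x y) := by
  simpa only [hloop.2.1, hloop.1] using hLC x e y

theorem LCIdent.mul_self_mul_mul (hLC : LCIdent mul) (hloop : IsLoopOp mul e) (x y z : L) :
    mul (mul x x) (mul y z) = mul (mul (mul x x) y) z := by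
  rw [hLC.mul_self_mul hloop, ← hLC, ← hLC.mul_self_mul hloop]

theorem CIdent.of_lcIdent (hcomm : CommOp mul) (hLC : LCIdent mul) : CIdent mul := by
  intro x y z
  rw [hcomm y x, hcomm (mul x y) x, hLC, hcomm y z, ← hLC, hcomm]

theorem CIdent.mul_mul_cancel_left (hC : CIdent mul) (hloop : IsLoopOp mul e)
    (h : mul a' a = e) (x : L) : mul a' (mul a x) = x := by
  obtain ⟨z, rfl⟩ := (hloop.2.2.1 a).2 x
  simpa only [h, hloop.1] using (hC a a' z).symm

theorem mul_eq_mul_mul_of_isotopism {circ : L → L → L}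
    (hcancel : Function.Injective (fun x => mul x a)) (ha : ∀ x, mul a (mul a' x) = x)
    (hcomm₂ : CommOp circ) (hiso : ∀ x y, circ x (mul a y) = mul (mul x y) a) (x y : L) :
    mul x y = mul (mul a y) (mul a' x) :=
  hcancel <| calc
    mul (mul x y) a = circ x (mul a y) := (hiso x y).symm
    _ = circ (mul a y) (mul a (mul a' x)) := by rw [hcomm₂, ha]
    _ = mul (mul (mul a y) (mul a' x)) a := hiso _ _

theorem twistedMul_comm (hloop : IsLoopOp mul e) (hLC : LCIdent mul)
    (ha : ∀ x, mul a (mul a' x) = x) (hswap : ∀ x y, mul x y = mul (mul a y) (mul a' x)) :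
    CommOp (twistedMul mul a) := by
  have hsymm : ∀ x y, mul y (mul a' x) = mul x (mul a' y) := fun x y => by
    rw [hswap y (mul a' x), ha]
  have hsq : ∀ x y, mul x (mul a y) = mul (mul a a) (mul x (mul a' y)) := fun x y => by
    rw [hswap x (mul a y), ← hLC.mul_self_mul hloop, ← hLC.mul_self_mul_mul hloop, hsymm x y]
  intro x y
  simp only [twistedMul]
  rw [hsq x y, hsq y x, hsymm x y]

theorem mul_mul_mul_mul_of_swap (hloop : IsLoopOp mul e) (hcomm : CommOp mul)
    (hLC : LCIdent mul) (ha : ∀ x, mul a (mul a' x) = x) (ha' : ∀ x, mul a' (mul a x) = x)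
    (hswap : ∀ x y, mul x y = mul (mul a y) (mul a' x)) (x w : L) :
    mul a (mul x (mul a (mul x w))) = mul (mul a x) (mul (mul a x) w) := by
  have hswap' : ∀ x y, mul x y = mul (mul a x) (mul a' y) := fun x y =>
    (hcomm x y).trans (hswap y x)
  set b := mul a x
  calc mul a (mul x (mul a (mul x w)))
      = mul a (mul (mul b b) (mul a' w)) := by
        rw [hswap' x (mul a (mul x w)), ha', hswap' x w, hLC.mul_self_mul hloop]
    _ = mul (mul b b) (mul a (mul a' w)) := by
        rw [hcomm a, ← hLC.mul_self_mul_mul hloop, hcomm (mul a' w) a]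
    _ = mul b (mul b w) := by rw [ha, hLC.mul_self_mul hloop]

theorem twistedMul_cIdent (hloop : IsLoopOp mul e) (hcomm : CommOp mul) (hLC : LCIdent mul)
    (ha : ∀ x, mul a (mul a' x) = x) (ha' : ∀ x, mul a' (mul a x) = x)
    (hswap : ∀ x y, mul x y = mul (mul a y) (mul a' x)) :
    CIdent (twistedMul mul a) := by
  intro x y z
  simp only [twistedMul]
  rw [mul_mul_mul_mul_of_swap hloop hcomm hLC ha ha' hswap, CIdent.of_lcIdent hcomm hLC]

theorem isLoopOp_twistedMul (hloop : IsLoopOp mul e) (h : mul a a' = e)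
    (ha' : ∀ x, mul a' (mul a x) = x) : IsLoopOp (twistedMul mul a) a' :=
  ⟨ha', fun x => by simp only [twistedMul, h, hloop.2.1],
    fun b => (hloop.2.2.1 b).comp (hloop.2.2.1 a), fun b => hloop.2.2.2 (mul a b)⟩

theorem mul_twistedMul_of_isotopism {circ : L → L → L} (hcomm : CommOp mul)
    (htw : CommOp (twistedMul mul a)) (hiso : ∀ x y, circ x (mul a y) = mul (mul x y) a)
    (x y : L) : mul a (twistedMul mul a x y) = circ (mul a x) (mul a y) := by
  rw [hiso, hcomm a, htw, twistedMul, hcomm y]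

end CommLCLoop

theorem stmt3_general {L : Type*} (mul circ star star2 : L → L → L) (e a a' : L)
    (hloop : IsLoopOp mul e) (hcomm : CommOp mul) (hLC : LCIdent mul)
    (hinv : mul a a' = e ∧ mul a' a = e)
    (hcomm₂ : CommOp circ)
    (hiso : ∀ x y, circ x (mul a y) = mul (mul x y) a)
    (hstar : ∀ x y, star (mul x e) (mul a' y) = mul x y)
    (hstar2 : ∀ x y, star2 (mul x a') (mul e y) = mul x y) :
    (Function.Bijective (fun x => mul a x) ∧
      ∀ x y, mul a (star x y) = circ (mul a x) (mul a y)) ∧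
    (Function.Bijective (fun x => mul x a) ∧
      ∀ x y, mul (star2 x y) a = circ (mul x a) (mul y a)) ∧
    ((∃ e₃, IsLoopOp star e₃) ∧ CIdent star ∧ CommOp star) ∧
    ((∃ e₄, IsLoopOp star2 e₄) ∧ CIdent star2 ∧ CommOp star2) := by
  have hC := CIdent.of_lcIdent hcomm hLC
  have ha := hC.mul_mul_cancel_left hloop hinv.1
  have ha' := hC.mul_mul_cancel_left hloop hinv.2
  have hswap := mul_eq_mul_mul_of_isotopism (hloop.2.2.2 a).1 ha hcomm₂ hiso
  have htw := twistedMul_comm hloop hLC ha hswap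
  have hstar_eq : star = twistedMul mul a := funext₂ fun x y => by
    have h := hstar x (mul a y)
    rwa [hloop.2.1, ha'] at h
  have hstar2_eq : star2 = twistedMul mul a := funext₂ fun x y => by
    have h := hstar2 (mul a x) y
    rw [hcomm _ a', ha', hloop.1] at h
    exact h.trans ((hcomm _ _).trans (htw y x))
  have hLa := mul_twistedMul_of_isotopism hcomm htw hiso
  subst hstar_eq hstar2_eq
  have hstarLoop := isLoopOp_twistedMul hloop hinv.1 ha'
  have hstarC := twistedMul_cIdent hloop hcomm hLC ha ha' hswap
  refine ⟨⟨hloop.2.2.1 a, hLa⟩, ⟨hloop.2.2.2 a, fun x y => ?_⟩, ⟨⟨a', hstarLoop⟩, hstarC, htw⟩,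
    ⟨⟨a', hstarLoop⟩, hstarC, htw⟩⟩
  rw [hcomm _ a, hcomm x a, hcomm y a]
  exact hLa x y

/-- In the setting of a commutative LC-loop `(L,·)` with identity `e`,
`a ∈ L`, and a commutative loop `(L,∘)` with `(I, L_a, L_a)` an isotopism from
`(L,·)` to `(L,∘)`, with `∗ = F_{a⁻¹,e}` and `⋆ = F_{e,a⁻¹}` (the f,g-isotopes),
`L_a` is an isomorphism of `(L,∗)` onto `(L,∘)`, `R_a` is an isomorphism of
`(L,⋆)` onto `(L,∘)`, and both `(L,∗)` and `(L,⋆)` are commutative C-loops. -/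
theorem stmt3 {L : Type*} (mul circ star star2 : L → L → L) (e e₂ a a' : L)
    (hloop : IsLoopOp mul e) (hcomm : CommOp mul) (hLC : LCIdent mul)
    (hinv : mul a a' = e ∧ mul a' a = e)
    (hloop₂ : IsLoopOp circ e₂) (hcomm₂ : CommOp circ)
    (hiso : ∀ x y, circ x (mul a y) = mul (mul x y) a)
    (hstar : ∀ x y, star (mul x e) (mul a' y) = mul x y)
    (hstar2 : ∀ x y, star2 (mul x a') (mul e y) = mul x y) :
    (Function.Bijective (fun x => mul a x) ∧
      ∀ x y, mul a (star x y) = circ (mul a x) (mul a y)) ∧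
    (Function.Bijective (fun x => mul x a) ∧
      ∀ x y, mul (star2 x y) a = circ (mul x a) (mul y a)) ∧
    ((∃ e₃, IsLoopOp star e₃) ∧ CIdent star ∧ CommOp star) ∧
    ((∃ e₄, IsLoopOp star2 e₄) ∧ CIdent star2 ∧ CommOp star2) :=
  stmt3_general mul circ star star2 e a a' hloop hcomm hLC hinv hcomm₂ hiso hstar hstar2
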